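/- The function F : ℝ² → ℝ defined by F(x,y) = (x² + y²)^{α/2} · x, for a real exponent α > 0 with α ∉ 2ℕ, is not real analytic at the origin; i.e., there is no power series ∑ a_{mn} x^m y^n converging absolutely in some neighborhood of (0,0) whose sum equals F there. -/

import Mathlib

/-!
Restricted to `y = 0`, an absolutely convergent expansion would make `g x = |x| ^ α * x`
analytic at `0`. Write `g x = x ^ n * h x` with `h` analytic, `h 0 ≠ 0` and `n` the order of
vanishing. For `x > 0` this gives `h x = x ^ (α + 1 - n)`, which has a finite nonzero limit at
`0⁺` only if `α + 1 = n`. Since `g` is odd, `(-1) ^ n * h 0 = -h 0`, so `n` is odd and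
`α = n - 1` is even.
-/

open Real Filter Topology

theorem tsum_mul_pow_mul_zero_pow {R : Type*} [Semiring R] [TopologicalSpace R]
    (a : ℕ × ℕ → R) (x : R) :
    ∑' p : ℕ × ℕ, a p * x ^ p.1 * 0 ^ p.2 = ∑' m, a (m, 0) * x ^ m := by
  rw [← (Prod.mk_left_injective 0).tsum_eq]
  · simp
  · rintro ⟨m, _ | k⟩ hp
    · exact ⟨m, rfl⟩
    · simp at hp

theorem analyticAt_tsum_mul_pow {𝕜 : Type*} [NontriviallyNormedField 𝕜] [CompleteSpace 𝕜]
    {c : ℕ → 𝕜} {r : ℝ} (hr : 0 < r) (hs : Summable fun m => ‖c m‖ * r ^ m) :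
    AnalyticAt 𝕜 (fun x => ∑' m, c m * x ^ m) 0 := by
  set p := FormalMultilinearSeries.ofScalars 𝕜 c
  have hp : 0 < p.radius := (ENNReal.coe_pos.2 (Real.toNNReal_pos.2 hr)).trans_le
    (p.le_radius_of_summable_norm (by simpa [p, hr.le] using hs))
  have hsum : p.sum = fun x => ∑' m, c m * x ^ m := by
    simp_rw [← smul_eq_mul]
    exact FormalMultilinearSeries.ofScalarsSum_eq_tsum c
  exact hsum ▸ (p.hasFPowerSeriesOnBall hp).analyticAt

theorem AnalyticAt.odd_of_analyticOrderAt_eq {𝕜 E : Type*} [NontriviallyNormedField 𝕜]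
    [CharZero 𝕜] [NormedAddCommGroup E] [NormedSpace 𝕜 E] {f : 𝕜 → E} {n : ℕ}
    (hf : AnalyticAt 𝕜 f 0) (hodd : ∀ x, f (-x) = -f x) (hn : analyticOrderAt f 0 = n) :
    Odd n := by
  obtain ⟨g, hg, hg0, hfg⟩ := hf.analyticOrderAt_eq_natCast.1 hn
  have hfg_neg : ∀ᶠ x in 𝓝 (0 : 𝕜), f (-x) = (-x - 0) ^ n • g (-x) :=
    (continuous_neg.tendsto' 0 0 neg_zero).eventually hfg
  have hg_neg : (fun x => ((-1) ^ n : 𝕜) • g (-x)) =ᶠ[𝓝[≠] 0] fun x => -g x := by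
    filter_upwards [nhdsWithin_le_nhds hfg, nhdsWithin_le_nhds hfg_neg, self_mem_nhdsWithin]
      with x hx hx_neg hx0
    rw [hodd, hx, sub_zero, sub_zero, neg_pow, mul_smul, ← smul_neg, smul_comm] at hx_neg
    exact (smul_right_injective E (pow_ne_zero n hx0) hx_neg).symm
  have hg0_neg : ((-1) ^ n : 𝕜) • g 0 = -g 0 := by
    have hcont : ContinuousAt (fun x => ((-1) ^ n : 𝕜) • g (-x)) 0 :=
      (hg.continuousAt.comp_of_eq continuous_neg.continuousAt neg_zero).const_smul _
    simpa using ((hcont.eventuallyEq_nhds_iff_eventuallyEq_nhdsNE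
      hg.continuousAt.neg).1 hg_neg).self_of_nhds
  rcases Nat.even_or_odd n with he | ho
  · rw [he.neg_one_pow, one_smul, eq_neg_iff_add_eq_zero, ← two_smul 𝕜, smul_eq_zero] at hg0_neg
    exact absurd (hg0_neg.resolve_left two_ne_zero) hg0
  · exact ho

theorem eq_zero_of_tendsto_rpow_nhdsGT_zero {γ L : ℝ} (hL : L ≠ 0)
    (h : Tendsto (fun x : ℝ => x ^ γ) (𝓝[>] 0) (𝓝 L)) : γ = 0 := by
  rcases lt_trichotomy γ 0 with hγ | hγ | hγ
  · exact absurd h (not_tendsto_nhds_of_tendsto_atTop (tendsto_rpow_neg_nhdsGT_zero hγ) L)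
  · exact hγ
  · have h0 : Tendsto (fun x : ℝ => x ^ γ) (𝓝[>] 0) (𝓝 0) := by
      simpa [zero_rpow hγ.ne'] using
        (continuousAt_rpow_const 0 γ (Or.inr hγ.le)).tendsto.mono_left nhdsWithin_le_nhds
    exact absurd (tendsto_nhds_unique h h0) hL

theorem AnalyticAt.exists_analyticOrderAt_eq_of_eventuallyEq_rpow {f : ℝ → ℝ} {γ : ℝ}
    (hf : AnalyticAt ℝ f 0) (hfγ : f =ᶠ[𝓝[>] 0] fun x => x ^ γ) :
    ∃ n : ℕ, analyticOrderAt f 0 = n ∧ γ = n := by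
  have hfin : analyticOrderAt f 0 ≠ ⊤ := by
    intro htop
    have hfalse : ∀ᶠ _ in 𝓝[>] (0 : ℝ), False := by
      filter_upwards [nhdsWithin_le_nhds (analyticOrderAt_eq_top.1 htop), hfγ,
        self_mem_nhdsWithin] with x hx0 hxγ hx
      exact (rpow_pos_of_pos hx γ).ne' (hxγ ▸ hx0)
    obtain ⟨_, ⟨⟩⟩ := hfalse.exists
  obtain ⟨g, hg, hg0, hfg⟩ := hf.analyticOrderAt_ne_top.1 hfin
  set n := analyticOrderNatAt f 0
  have hg_rpow : g =ᶠ[𝓝[>] 0] fun x => x ^ (γ - n) := by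
    filter_upwards [nhdsWithin_le_nhds hfg, hfγ, self_mem_nhdsWithin] with x hx hxγ hx0
    rw [rpow_sub hx0, rpow_natCast, ← hxγ, hx, sub_zero, smul_eq_mul,
      mul_div_cancel_left₀ _ (pow_ne_zero n (ne_of_gt hx0))]
  have hlim := (hg.continuousAt.tendsto.mono_left nhdsWithin_le_nhds).congr' hg_rpow
  exact ⟨n, (Nat.cast_analyticOrderNatAt hfin).symm,
    sub_eq_zero.1 (eq_zero_of_tendsto_rpow_nhdsGT_zero hg0 hlim)⟩

theorem not_analyticAt_abs_rpow_mul_self {β : ℝ} (hβ : ∀ k : ℕ, β ≠ 2 * k) :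
    ¬ AnalyticAt ℝ (fun x : ℝ => |x| ^ β * x) 0 := by
  intro hf
  obtain ⟨n, hn, hβn⟩ := hf.exists_analyticOrderAt_eq_of_eventuallyEq_rpow (γ := β + 1) <| by
    filter_upwards [self_mem_nhdsWithin] with x (hx : 0 < x)
    rw [abs_of_pos hx, rpow_add_one hx.ne']
  obtain ⟨k, rfl⟩ := hf.odd_of_analyticOrderAt_eq (fun x => by simp [abs_neg]) hn
  exact hβ k (by push_cast at hβn; linarith)

theorem powerNonlinearity_not_realAnalytic_general (α : ℝ)
    (hαn : ∀ k : ℕ, α ≠ 2 * k) :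
    ¬ ∃ (a : ℕ × ℕ → ℝ) (δ : ℝ), 0 < δ ∧
      ∀ x y : ℝ, |x| < δ → |y| < δ →
        Summable (fun p : ℕ × ℕ => |a p| * |x| ^ p.1 * |y| ^ p.2) ∧
          (x ^ 2 + y ^ 2) ^ (α / 2) * x = ∑' p : ℕ × ℕ, a p * x ^ p.1 * y ^ p.2 := by
  rintro ⟨a, δ, hδ, H⟩
  have hF : ∀ x : ℝ, |x| < δ → |x| ^ α * x = ∑' m, a (m, 0) * x ^ m := fun x hx => by
    rw [← tsum_mul_pow_mul_zero_pow, ← (H x 0 hx (by simpa)).2, zero_pow two_ne_zero, add_zero,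
      ← sq_abs, ← rpow_natCast, ← rpow_mul (abs_nonneg x), Nat.cast_ofNat,
      mul_div_cancel₀ α two_ne_zero]
  have hr : |δ / 2| < δ := by rw [abs_of_pos (half_pos hδ)]; linarith
  have hs : Summable fun m => ‖a (m, 0)‖ * (δ / 2) ^ m := by
    simpa [Function.comp_def, abs_of_pos (half_pos hδ)] using
      (H _ 0 hr (by simpa)).1.comp_injective (Prod.mk_left_injective 0)
  refine not_analyticAt_abs_rpow_mul_self hαn <|
    (analyticAt_congr ?_).2 (analyticAt_tsum_mul_pow (half_pos hδ) hs)
  filter_upwards [Metric.ball_mem_nhds 0 hδ] with x hx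
  exact hF x (by simpa using hx)

/-- For `α > 0` with `α ∉ 2ℕ`, the function `F(x,y) = (x²+y²)^{α/2}·x` is not real analytic
at the origin: it agrees with no absolutely convergent double power series near `(0,0)`. -/
theorem powerNonlinearity_not_realAnalytic (α : ℝ) (hα : 0 < α)
    (hαn : ∀ k : ℕ, α ≠ 2 * k) :
    ¬ ∃ (a : ℕ × ℕ → ℝ) (δ : ℝ), 0 < δ ∧
      ∀ x y : ℝ, |x| < δ → |y| < δ →
        Summable (fun p : ℕ × ℕ => |a p| * |x| ^ p.1 * |y| ^ p.2) ∧
          (x ^ 2 + y ^ 2) ^ (α / 2) * x = ∑' p : ℕ × ℕ, a p * x ^ p.1 * y ^ p.2 :=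
  powerNonlinearity_not_realAnalytic_general α hαn
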